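/- Exponential generating function for sequence A005425: for n ≥ 0 let β_n = Σ_π 2^{s(π)}, the sum over all set partitions π of {1,…,n} all of whose blocks have size at most 2, where s(π) is the number of singleton blocks of π (so β_0 = 1 and the sequence begins 1, 2, 5, 14, 43, 142, …). Then in ℚ[[X]] one has Σ_{n≥0} β_n X^n/n! = exp( 2X + X²/2 ), where exp is applied to a power series with zero constant term. -/

import Mathlib

/-- A set partition of `{1,…,n}` (modelled as `Fin n`). -/
def IsSetPartition (n : ℕ) (π : Finset (Finset (Fin n))) : Prop :=
  (∀ B ∈ π, B.Nonempty) ∧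
  (∀ B ∈ π, ∀ C ∈ π, B ≠ C → B ∩ C = ∅) ∧
  π.sup id = Finset.univ

open scoped Classical in
/-- The set of all set partitions of `{1,…,n}`. -/
noncomputable def setPartitions (n : ℕ) : Finset (Finset (Finset (Fin n))) :=
  Finset.univ.filter (IsSetPartition n)

open scoped Classical in
/-- `β_n = Σ_π 2^{s(π)}`, summed over the set partitions of `{1,…,n}` all of
whose blocks have size at most `2`, where `s(π)` is the number of singleton
blocks (sequence A005425). -/
noncomputable def betaS (n : ℕ) : ℚ :=
  ∑ π ∈ (setPartitions n).filter (fun π => ∀ B ∈ π, B.card ≤ 2),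
    (2 : ℚ) ^ (π.filter (fun B => B.card = 1)).card

/-- The exponential `Σ_{k≥0} F^k / k!` of a power series `F` with zero constant
term, computed coefficientwise. -/
noncomputable def expComp (F : PowerSeries ℚ) : PowerSeries ℚ :=
  PowerSeries.mk fun n => ∑ k ∈ Finset.range (n + 1),
    (k.factorial : ℚ)⁻¹ * PowerSeries.coeff (R := ℚ) n (F ^ k)

/-!
Weight a set partition by `∏ w |B|` over its blocks and let `Z n` be the total weight of the
partitions of an `n`-set. Splitting off the block that contains a new point gives
`Z (m + 1) = ∑ k, (m choose k) * w (k + 1) * Z (m - k)`. For `E = exp W` with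
`W = ∑ w k X^k / k!`, the chain rule gives `E' = W' * E`, whose coefficients obey the same
recurrence; so `E` is the exponential generating function of `Z`. The weights `w 1 = 2`,
`w 2 = 1`, `w k = 0` otherwise give `β` and `W = 2X + X²/2`.
-/

open Finset PowerSeries Nat

namespace Finset

variable {α : Type*} [DecidableEq α]

def IsPartition (s : Finset α) (π : Finset (Finset α)) : Prop :=
  (∀ B ∈ π, B.Nonempty) ∧ (∀ B ∈ π, ∀ C ∈ π, B ≠ C → Disjoint B C) ∧ π.sup id = s

namespace IsPartition

variable {s t B C : Finset α} {π : Finset (Finset α)} {a : α}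

theorem subset (h : s.IsPartition π) (hB : B ∈ π) : B ⊆ s :=
  h.2.2 ▸ le_sup (f := id) hB

theorem exists_mem (h : s.IsPartition π) (ha : a ∈ s) : ∃ B ∈ π, a ∈ B := by
  rw [← h.2.2] at ha
  simpa using mem_sup.1 ha

theorem notMem_of_disjoint (h : s.IsPartition π) (hB : B.Nonempty) (hBs : Disjoint B s) :
    B ∉ π := fun hmem =>
  hB.ne_empty (disjoint_self.1 (hBs.mono_right (h.subset hmem)))

theorem insert (h : t.IsPartition π) (hB : B.Nonempty) (hBt : Disjoint B t) :
    (B ∪ t).IsPartition (insert B π) := by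
  obtain ⟨hne, hdisj, hsup⟩ := h
  refine ⟨?_, ?_, by rw [sup_insert, hsup]; rfl⟩
  · simpa [hB] using hne
  · have hBC : ∀ C ∈ π, Disjoint B C := fun C hC =>
      hBt.mono_right (hsup ▸ le_sup (f := id) hC)
    simp only [mem_insert]
    rintro C (rfl | hC) D (rfl | hD) hCD
    exacts [absurd rfl hCD, hBC D hD, (hBC C hC).symm, hdisj C hC D hD hCD]

theorem erase (h : s.IsPartition π) (hB : B ∈ π) : (s \ B).IsPartition (π.erase B) := by
  obtain ⟨hne, hdisj, hsup⟩ := h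
  refine ⟨fun C hC => hne C (mem_of_mem_erase hC),
    fun C hC D hD => hdisj C (mem_of_mem_erase hC) D (mem_of_mem_erase hD), ?_⟩
  ext x
  simp only [mem_sup, id, mem_erase, mem_sdiff, ← hsup]
  constructor
  · rintro ⟨C, ⟨hCB, hC⟩, hxC⟩
    exact ⟨⟨C, hC, hxC⟩, disjoint_left.1 (hdisj C hC B hB hCB) hxC⟩
  · rintro ⟨⟨C, hC, hxC⟩, hxB⟩
    exact ⟨C, ⟨by rintro rfl; exact hxB hxC, hC⟩, hxC⟩

end IsPartition

theorem isPartition_empty_iff {π : Finset (Finset α)} :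
    (∅ : Finset α).IsPartition π ↔ π = ∅ := by
  refine ⟨fun h => eq_empty_of_forall_notMem fun B hB => ?_, ?_⟩
  · obtain ⟨x, hx⟩ := h.1 B hB
    exact notMem_empty x (h.subset hB hx)
  · rintro rfl
    simp [IsPartition]

open Classical in
noncomputable def partitions (s : Finset α) : Finset (Finset (Finset α)) :=
  s.powerset.powerset.filter s.IsPartition

theorem mem_partitions {s : Finset α} {π : Finset (Finset α)} :
    π ∈ s.partitions ↔ s.IsPartition π := by
  simp only [partitions, mem_filter, mem_powerset, and_iff_right_iff_imp]
  exact fun h B hB => mem_powerset.2 (h.subset hB)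

variable {R : Type*} [CommSemiring R]

noncomputable def partitionSum (w : ℕ → R) (s : Finset α) : R :=
  ∑ π ∈ s.partitions, ∏ B ∈ π, w #B

theorem partitionSum_empty (w : ℕ → R) : partitionSum w (∅ : Finset α) = 1 := by
  have : (∅ : Finset α).partitions = {∅} := by
    ext π
    rw [mem_partitions, isPartition_empty_iff, mem_singleton]
  simp [partitionSum, this]

theorem partitionSum_insert (w : ℕ → R) {a : α} {s : Finset α} (ha : a ∉ s) :
    partitionSum w (insert a s) = ∑ B ∈ s.powerset, w (#B + 1) * partitionSum w (s \ B) := by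
  have hdisj : ∀ B, Disjoint (insert a B) (s \ B) := fun B => by
    simpa [disjoint_insert_left, ha] using disjoint_sdiff
  have hnew : ∀ B π, (s \ B).IsPartition π → insert a B ∉ π := fun B π hπ =>
    hπ.notMem_of_disjoint (insert_nonempty a B) (hdisj B)
  simp_rw [partitionSum, mul_sum]
  rw [sum_sigma']
  symm
  refine sum_bij (fun p _ => insert (insert a p.1) p.2) ?_ ?_ ?_ ?_
  · rintro ⟨B, π⟩ hp
    simp only [mem_sigma, mem_powerset, mem_partitions] at hp ⊢
    have := hp.2.insert (insert_nonempty a B) (hdisj B)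
    rwa [insert_union, union_sdiff_of_subset hp.1] at this
  · rintro ⟨B₁, π₁⟩ h₁ ⟨B₂, π₂⟩ h₂ heq
    simp only [mem_sigma, mem_powerset, mem_partitions] at h₁ h₂
    have hblock : insert a B₁ = insert a B₂ := by
      have hmem : insert a B₁ ∈ insert (insert a B₂) π₂ := heq ▸ mem_insert_self _ _
      refine (mem_insert.1 hmem).resolve_right fun h => ?_
      exact ha (mem_sdiff.1 (h₂.2.subset h (mem_insert_self a B₁))).1
    obtain rfl : B₁ = B₂ := by
      rw [← erase_insert (fun h => ha (h₁.1 h)), hblock, erase_insert (fun h => ha (h₂.1 h))]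
    rw [← erase_insert (hnew _ _ h₁.2), heq, erase_insert (hnew _ _ h₂.2)]
  · intro π hπ
    rw [mem_partitions] at hπ
    obtain ⟨B, hB, haB⟩ := hπ.exists_mem (mem_insert_self a s)
    have hsdiff : insert a s \ B = s \ B.erase a := by
      ext x
      by_cases hx : x = a <;> simp_all
    refine ⟨⟨B.erase a, π.erase B⟩, ?_, ?_⟩
    · simp only [mem_sigma, mem_powerset, mem_partitions, ← hsdiff]
      refine ⟨fun x hx => ?_, hπ.erase hB⟩
      exact (mem_insert.1 (hπ.subset hB (mem_of_mem_erase hx))).resolve_left (ne_of_mem_erase hx)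
    · simp [insert_erase haB, insert_erase hB]
  · rintro ⟨B, π⟩ hp
    simp only [mem_sigma, mem_powerset, mem_partitions] at hp
    rw [prod_insert (hnew B π hp.2), card_insert_of_notMem (fun h => ha (hp.1 h))]

theorem partitionSum_eq_of_recurrence (w : ℕ → R) {e : ℕ → R} (h0 : e 0 = 1)
    (hsucc : ∀ m, e (m + 1) = ∑ k ∈ range (m + 1), m.choose k * w (k + 1) * e (m - k))
    (s : Finset α) : partitionSum w s = e #s := by
  induction s using strongInduction with
  | _ s ih =>
    rcases s.eq_empty_or_nonempty with rfl | ⟨a, ha⟩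
    · rw [partitionSum_empty, card_empty, h0]
    · rw [← insert_erase ha, partitionSum_insert w (notMem_erase a s),
        card_insert_of_notMem (notMem_erase a s), hsucc]
      set t := s.erase a
      calc ∑ B ∈ t.powerset, w (#B + 1) * partitionSum w (t \ B)
          = ∑ B ∈ t.powerset, w (#B + 1) * e (#t - #B) := by
            refine sum_congr rfl fun B hB => ?_
            rw [ih _ (sdiff_subset.trans_ssubset (erase_ssubset ha)),
              card_sdiff_of_subset (mem_powerset.1 hB)]
        _ = _ := by
            rw [sum_powerset_apply_card (fun k => w (k + 1) * e (#t - k))]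
            simp_rw [nsmul_eq_mul, mul_assoc]

end Finset

namespace PowerSeries

theorem coeff_pow_eq_zero_of_lt {R : Type*} [CommSemiring R] {F : R⟦X⟧}
    (hF : constantCoeff F = 0) {n k : ℕ} (h : n < k) : coeff n (F ^ k) = 0 :=
  X_pow_dvd_iff.1 (pow_dvd_pow_of_dvd (X_dvd_iff.2 hF) k) n h

theorem expComp_eq_exp_subst {F : ℚ⟦X⟧} (hF : constantCoeff F = 0) :
    expComp F = (exp ℚ).subst F := by
  ext n
  rw [coeff_subst' (HasSubst.of_constantCoeff_zero' hF), expComp, coeff_mk,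
    finsum_eq_sum_of_support_subset (s := range (n + 1))]
  · simp [coeff_exp]
  · intro k hk
    simp only [Function.mem_support, coe_range, Set.mem_Iio] at hk ⊢
    by_contra! hnk
    exact hk (by rw [coeff_pow_eq_zero_of_lt hF (by omega), smul_zero])

theorem derivative_expComp {F : ℚ⟦X⟧} (hF : constantCoeff F = 0) :
    d⁄dX ℚ (expComp F) = d⁄dX ℚ F * expComp F := by
  rw [expComp_eq_exp_subst hF, derivative_subst (HasSubst.of_constantCoeff_zero' hF),
    derivative_exp, mul_comm]

theorem coeff_zero_expComp (F : ℚ⟦X⟧) : coeff 0 (expComp F) = 1 := by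
  simp [expComp]

theorem derivative_mk_div_factorial {K : Type*} [Field K] [CharZero K] (a : ℕ → K) :
    d⁄dX K (mk fun n => a n / n !) = mk fun n => a (n + 1) / n ! := by
  ext n
  rw [coeff_derivative, coeff_mk, coeff_mk, factorial_succ]
  push_cast
  field_simp

theorem coeff_mk_div_factorial_mul {K : Type*} [Field K] [CharZero K] (a b : ℕ → K) (n : ℕ) :
    coeff n ((mk fun n => a n / n !) * mk fun n => b n / n !) =
      (∑ k ∈ range (n + 1), n.choose k * a k * b (n - k)) / n ! := by
  rw [coeff_mul, Nat.sum_antidiagonal_eq_sum_range_succ (fun i j => coeff i _ * coeff j _),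
    sum_div]
  refine sum_congr rfl fun k hk => ?_
  have hkn : k ≤ n := by simpa [Nat.lt_succ_iff] using hk
  rw [coeff_mk, coeff_mk, ← Nat.choose_mul_factorial_mul_factorial hkn]
  push_cast
  have : (n.choose k : K) ≠ 0 := by exact_mod_cast (Nat.choose_pos hkn).ne'
  field_simp

theorem factorial_mul_coeff_expComp_succ (w : ℕ → ℚ) (hw : w 0 = 0) (m : ℕ) :
    ((m + 1)! : ℚ) * coeff (m + 1) (expComp (mk fun k => w k / k !)) =
      ∑ k ∈ range (m + 1), m.choose k * w (k + 1) *
        ((m - k)! * coeff (m - k) (expComp (mk fun k => w k / k !))) := by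
  set E := expComp (mk fun k => w k / k !)
  have hW : constantCoeff (mk fun k => w k / k !) = 0 := by
    simp [← coeff_zero_eq_constantCoeff_apply, hw]
  have hE : E = mk fun n => n ! * coeff n E / n ! := by
    ext n
    simp [field]
  have h : coeff m (d⁄dX ℚ E) = coeff m (d⁄dX ℚ (mk fun k => w k / k !) * E) :=
    congrArg (coeff m) (derivative_expComp hW)
  rw [hE] at h
  rw [derivative_mk_div_factorial, derivative_mk_div_factorial, coeff_mk,
    coeff_mk_div_factorial_mul] at h
  exact (div_left_inj' (by positivity)).1 h

end PowerSeries

theorem mk_partitionSum_div_factorial_eq_expComp (w : ℕ → ℚ) (hw : w 0 = 0) :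
    (mk fun n => partitionSum w (univ : Finset (Fin n)) / n !) =
      expComp (mk fun k => w k / k !) := by
  ext n
  rw [coeff_mk, partitionSum_eq_of_recurrence w
    (e := fun n => n ! * coeff n (expComp (mk fun k => w k / k !))) (by simp [coeff_zero_expComp])
    (factorial_mul_coeff_expComp_succ w hw), Finset.card_univ, Fintype.card_fin]
  field_simp

def singletonPairWeight : ℕ → ℚ
  | 1 => 2
  | 2 => 1
  | _ => 0

theorem prod_singletonPairWeight {α : Type*} {π : Finset (Finset α)}
    (hπ : ∀ B ∈ π, B.Nonempty) :
    ∏ B ∈ π, singletonPairWeight #B =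
      if ∀ B ∈ π, #B ≤ 2 then 2 ^ #(π.filter fun B => #B = 1) else 0 := by
  split_ifs with hsmall
  · calc ∏ B ∈ π, singletonPairWeight #B = ∏ B ∈ π, if #B = 1 then 2 else 1 :=
          prod_congr rfl fun B hB => by
            have := (hπ B hB).card_pos
            have := hsmall B hB
            interval_cases #B <;> rfl
      _ = _ := by rw [prod_ite, prod_const, prod_const_one, mul_one]
  · push Not at hsmall
    obtain ⟨B, hB, hcard⟩ := hsmall
    refine prod_eq_zero hB ?_
    obtain ⟨k, hk⟩ : ∃ k, #B = k + 3 := ⟨#B - 3, by omega⟩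
    rw [hk]
    rfl

theorem betaS_eq_partitionSum (n : ℕ) :
    betaS n = partitionSum singletonPairWeight (univ : Finset (Fin n)) := by
  have hparts : setPartitions n = (univ : Finset (Fin n)).partitions := by
    ext π
    simp [setPartitions, mem_partitions, IsSetPartition, IsPartition,
      disjoint_iff_inter_eq_empty]
  rw [betaS, partitionSum, hparts, sum_filter]
  refine sum_congr rfl fun π hπ => ?_
  rw [prod_singletonPairWeight (mem_partitions.1 hπ).1]
  convert rfl

/-- EGF for sequence A005425: `Σ_{n≥0} β_n X^n/n! = exp(2X + X²/2)`. -/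
theorem A005425_egf :
    PowerSeries.mk (fun n => betaS n / n.factorial) =
      expComp (PowerSeries.C (R := ℚ) 2 * PowerSeries.X +
        PowerSeries.C (R := ℚ) (1 / 2) * PowerSeries.X ^ 2) := by
  have hW : (C 2 * X + C (1 / 2) * X ^ 2 : ℚ⟦X⟧) = mk fun k => singletonPairWeight k / k ! := by
    ext k
    rcases k with _ | _ | _ | k <;> simp [singletonPairWeight, coeff_X_pow]
  simp_rw [betaS_eq_partitionSum, hW]
  exact mk_partitionSum_div_factorial_eq_expComp _ rfl
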